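/- Suppose an LME M(y) = M0 + Σ_{j=1}^k Mj*yj is closed under multiplication (i.e., M(y)^n is an LME for every n ≥ 1, with the support conditions of Definition: supp(M0)² ≤ supp(M0), supp(M0)·supp(Mj) ≤ supp(Mj), supp(Mj)·supp(M0) ≤ supp(Mj), supp(Mj)·supp(Ml) = 0 for j,l ≥ 1). Then the matrix exponential exp(M(γ)) is an affine function of γ: there exist matrices Q0, Q1, ..., Qk such that for every valuation γ ∈ ℝ^k, exp(M0 + Σj Mj*γj) = Q0 + Σj Qj*γj. -/

import Mathlib

/-!
Put `N = ∑ j, γ j • M j`. The support conditions force `N * M0 ^ b * N = 0` for every `b`, so every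
word with two letters `N` drops out of `(M0 + N) ^ m`, leaving
`M0 ^ m + ∑ a < m, M0 ^ a * N * M0 ^ (m - 1 - a)`, which is affine in `N`. Summing the exponential
series term by term gives `exp (M0 + N) = exp M0 + ∑ j, γ j • (exp (M0 + M j) - exp M0)`.
-/

open Matrix

noncomputable def supp {n : ℕ} (M : Matrix (Fin n) (Fin n) ℝ) : Matrix (Fin n) (Fin n) Bool :=
  fun i j => decide (M i j ≠ 0)

def bmul {n : ℕ} (A B : Matrix (Fin n) (Fin n) Bool) : Matrix (Fin n) (Fin n) Bool :=
  fun i j => decide (∃ l, A i l = true ∧ B l j = true)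

def ble {n : ℕ} (A B : Matrix (Fin n) (Fin n) Bool) : Prop :=
  ∀ i j, B i j = false → A i j = false

open Finset

section Ring

variable {R : Type*} [Ring R]

theorem add_pow_eq_pow_add_sum {A N : R} (hN : ∀ b : ℕ, N * A ^ b * N = 0) (m : ℕ) :
    (A + N) ^ m = A ^ m + ∑ a ∈ range m, A ^ a * N * A ^ (m - 1 - a) := by
  induction m with
  | zero => simp
  | succ m ih =>
    have hN_sum : N * ∑ a ∈ range m, A ^ a * N * A ^ (m - 1 - a) = 0 := by
      simp only [mul_sum, ← mul_assoc, hN, zero_mul, sum_const_zero]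
    have hshift : ∑ a ∈ range (m + 1), A ^ a * N * A ^ (m + 1 - 1 - a)
        = A * ∑ a ∈ range m, A ^ a * N * A ^ (m - 1 - a) + N * A ^ m := by
      rw [sum_range_succ', mul_sum]
      congr 1
      · refine sum_congr rfl fun a _ => ?_
        rw [pow_succ', Nat.add_sub_cancel, Nat.sub_sub, add_comm 1 a]
        noncomm_ring
      · simp
    rw [pow_succ', ih, hshift, add_mul, mul_add, mul_add, hN_sum, pow_succ']
    abel

theorem add_sum_smul_pow {𝕂 ι : Type*} [CommSemiring 𝕂] [Algebra 𝕂 R] [Fintype ι]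
    (A : R) (N : ι → R) (hN : ∀ i j (b : ℕ), N i * A ^ b * N j = 0) (c : ι → 𝕂) (m : ℕ) :
    (A + ∑ i, c i • N i) ^ m = A ^ m + ∑ i, c i • ((A + N i) ^ m - A ^ m) := by
  have hsum : ∀ b : ℕ, (∑ i, c i • N i) * A ^ b * (∑ i, c i • N i) = 0 := fun b => by
    simp only [sum_mul, mul_sum, smul_mul_assoc, mul_smul_comm, hN, smul_zero, sum_const_zero]
  simp only [add_pow_eq_pow_add_sum hsum, add_pow_eq_pow_add_sum (hN _ _), add_sub_cancel_left,
    mul_sum, sum_mul, mul_smul_comm, smul_mul_assoc, smul_sum]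
  rw [sum_comm]

end Ring

theorem NormedSpace.exp_add_sum_smul {𝕂 𝔸 ι : Type*} [RCLike 𝕂] [NormedRing 𝔸] [NormedAlgebra 𝕂 𝔸]
    [CompleteSpace 𝔸] [Fintype ι] (A : 𝔸) (N : ι → 𝔸)
    (hN : ∀ i j (b : ℕ), N i * A ^ b * N j = 0) (c : ι → 𝕂) :
    NormedSpace.exp (A + ∑ i, c i • N i)
      = NormedSpace.exp A + ∑ i, c i • (NormedSpace.exp (A + N i) - NormedSpace.exp A) := by
  have hA := NormedSpace.exp_series_hasSum_exp' (𝕂 := 𝕂) A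
  have hcomb := hA.add (hasSum_sum (s := univ) fun i _ =>
    ((NormedSpace.exp_series_hasSum_exp' (𝕂 := 𝕂) (A + N i)).sub hA).const_smul (c i))
  refine (NormedSpace.exp_series_hasSum_exp' (𝕂 := 𝕂) _).unique (hcomb.congr_fun fun m => ?_)
  simp only [add_sum_smul_pow A N hN, smul_add, smul_sum, smul_sub, smul_comm (c _)]

section Support

variable {n : ℕ}

@[simp]
theorem supp_eq_false {M : Matrix (Fin n) (Fin n) ℝ} {i j : Fin n} :
    supp M i j = false ↔ M i j = 0 := by
  simp [supp]

theorem ble_trans {A B C : Matrix (Fin n) (Fin n) Bool} (hAB : ble A B) (hBC : ble B C) :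
    ble A C :=
  fun i j h => hAB i j (hBC i j h)

theorem bmul_ble_bmul_left {A A' : Matrix (Fin n) (Fin n) Bool} (B : Matrix (Fin n) (Fin n) Bool)
    (h : ble A A') : ble (bmul A B) (bmul A' B) := by
  intro i j hij
  simp only [bmul, decide_eq_false_iff_not, not_exists, not_and] at hij ⊢
  intro l hl
  exact hij l (by simpa using mt (h i l) (by simpa using hl))

theorem supp_mul_ble (X Y : Matrix (Fin n) (Fin n) ℝ) :
    ble (supp (X * Y)) (bmul (supp X) (supp Y)) := by
  intro i j hij
  have hXY : ∀ l, X i l ≠ 0 → Y l j = 0 := by simpa [bmul, supp] using hij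
  rw [supp_eq_false, mul_apply]
  exact sum_eq_zero fun l _ => by
    by_cases hl : X i l = 0
    · rw [hl, zero_mul]
    · rw [hXY l hl, mul_zero]

theorem supp_mul_pow_ble {X A : Matrix (Fin n) (Fin n) ℝ}
    (h : ble (bmul (supp X) (supp A)) (supp X)) (b : ℕ) : ble (supp (X * A ^ b)) (supp X) := by
  induction b with
  | zero => rw [pow_zero, mul_one]; exact fun _ _ h => h
  | succ b ih =>
    rw [pow_succ, ← mul_assoc]
    exact ble_trans (supp_mul_ble _ _) (ble_trans (bmul_ble_bmul_left _ ih) h)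

theorem mul_pow_mul_eq_zero {X A Y : Matrix (Fin n) (Fin n) ℝ}
    (hXA : ble (bmul (supp X) (supp A)) (supp X))
    (hXY : bmul (supp X) (supp Y) = fun _ _ => false) (b : ℕ) : X * A ^ b * Y = 0 := by
  have h := ble_trans (supp_mul_ble _ Y) (bmul_ble_bmul_left (supp Y) (supp_mul_pow_ble hXA b))
  ext i j
  simpa [hXY] using h i j

end Support

theorem exp_of_closed_lme_is_affine_general {n k : ℕ}
    (M0 : Matrix (Fin n) (Fin n) ℝ) (M : Fin k → Matrix (Fin n) (Fin n) ℝ)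
    (h2 : ∀ j, ble (bmul (supp (M j)) (supp M0)) (supp (M j)))
    (h3 : ∀ j l, bmul (supp (M j)) (supp (M l)) = fun _ _ => false) :
    ∃ (Q0 : Matrix (Fin n) (Fin n) ℝ) (Q : Fin k → Matrix (Fin n) (Fin n) ℝ),
      ∀ γ : Fin k → ℝ,
        NormedSpace.exp (M0 + ∑ j, γ j • M j) = Q0 + ∑ j, γ j • Q j := by
  let : NormedRing (Matrix (Fin n) (Fin n) ℝ) := Matrix.linftyOpNormedRing
  let : NormedAlgebra ℝ (Matrix (Fin n) (Fin n) ℝ) := Matrix.linftyOpNormedAlgebra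
  have hsandwich : ∀ i j (b : ℕ), M i * M0 ^ b * M j = 0 := fun i j b =>
    mul_pow_mul_eq_zero (h2 i) (h3 i j) b
  exact ⟨NormedSpace.exp M0, fun j => NormedSpace.exp (M0 + M j) - NormedSpace.exp M0,
    NormedSpace.exp_add_sum_smul M0 M hsandwich⟩

theorem exp_of_closed_lme_is_affine {n k : ℕ}
    (M0 : Matrix (Fin n) (Fin n) ℝ) (M : Fin k → Matrix (Fin n) (Fin n) ℝ)
    (h0 : ble (bmul (supp M0) (supp M0)) (supp M0))
    (h1 : ∀ j, ble (bmul (supp M0) (supp (M j))) (supp (M j)))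
    (h2 : ∀ j, ble (bmul (supp (M j)) (supp M0)) (supp (M j)))
    (h3 : ∀ j l, bmul (supp (M j)) (supp (M l)) = fun _ _ => false) :
    ∃ (Q0 : Matrix (Fin n) (Fin n) ℝ) (Q : Fin k → Matrix (Fin n) (Fin n) ℝ),
      ∀ γ : Fin k → ℝ,
        NormedSpace.exp (M0 + ∑ j, γ j • M j) = Q0 + ∑ j, γ j • Q j :=
  exp_of_closed_lme_is_affine_general M0 M h2 h3
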